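/- arXiv:2604.22870 — 2 statements merged into one kernel-verified Lean document; each statement's English description precedes it below -/
import Mathlib

section
/- Let G = (V, E, f) be a d-featured graph, L ≥ 1, c ≥ 1, and v, w, w′ ∈ V with (v, w) ∈ E, (v, w′) ∉ E, and G, w ∼^{L−1,c} G, w′. Let G′ = (V, E′, f) with E′ = (E \ {(v, w)}) ∪ {(v, w′)}. Then G, u ∼^{L,c,*}_∃ G′, u for every u ∈ V. -/
/-- A `d`-featured directed graph: finite nonempty vertex set, edge relation,
and a feature map into `{0,1}^d` (represented as `Fin d → Bool`). -/
structure FGraph (d : ℕ) where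
  V : Type
  [fintypeV : Fintype V]
  nonemptyV : Nonempty V
  E : V → V → Prop
  f : V → Fin d → Bool

attribute [instance] FGraph.fintypeV

/-- `c`-graded `L`-turn bisimilarity between pointed `d`-featured graphs. -/
def bisim (d c : ℕ) : (L : ℕ) → (G₁ G₂ : FGraph d) → G₁.V → G₂.V → Prop
  | 0, G₁, G₂, v₁, v₂ => G₁.f v₁ = G₂.f v₂
  | L + 1, G₁, G₂, v₁, v₂ =>
      G₁.f v₁ = G₂.f v₂ ∧
      (∀ k, k ≤ c → ∀ u₁ : Fin k → G₁.V, Function.Injective u₁ →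
        (∀ i, G₁.E v₁ (u₁ i)) →
        ∃ u₂ : Fin k → G₂.V, Function.Injective u₂ ∧ (∀ i, G₂.E v₂ (u₂ i)) ∧
          ∀ i, bisim d c L G₁ G₂ (u₁ i) (u₂ i)) ∧
      (∀ k, k ≤ c → ∀ u₂ : Fin k → G₂.V, Function.Injective u₂ →
        (∀ i, G₂.E v₂ (u₂ i)) →
        ∃ u₁ : Fin k → G₁.V, Function.Injective u₁ ∧ (∀ i, G₁.E v₁ (u₁ i)) ∧
          ∀ i, bisim d c L G₁ G₂ (u₁ i) (u₂ i))

/-- `∼^{L,c,*}_∃` : `c`-graded `L`-turn bisimilarity with (unbounded) global counting. -/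
def bisimStar (d c L : ℕ) (G₁ G₂ : FGraph d) (v₁ : G₁.V) (v₂ : G₂.V) : Prop :=
  bisim d c L G₁ G₂ v₁ v₂ ∧
  (∀ u : G₁.V,
    Set.ncard {u₁ : G₁.V | bisim d c L G₁ G₁ u₁ u} =
      Set.ncard {u₂ : G₂.V | bisim d c L G₂ G₁ u₂ u}) ∧
  (∀ u : G₂.V,
    Set.ncard {u₁ : G₁.V | bisim d c L G₁ G₂ u₁ u} =
      Set.ncard {u₂ : G₂.V | bisim d c L G₂ G₂ u₂ u})

/-- `∼^{L,c,q}_∃` : `c`-graded `L`-turn bisimilarity with global counting bounded by `q`. -/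
def bisimQ (d c L q : ℕ) (G₁ G₂ : FGraph d) (v₁ : G₁.V) (v₂ : G₂.V) : Prop :=
  bisim d c L G₁ G₂ v₁ v₂ ∧
  (∀ u : G₁.V,
    min (Set.ncard {u₁ : G₁.V | bisim d c L G₁ G₁ u₁ u}) q =
      min (Set.ncard {u₂ : G₂.V | bisim d c L G₂ G₁ u₂ u}) q) ∧
  (∀ u : G₂.V,
    min (Set.ncard {u₁ : G₁.V | bisim d c L G₁ G₂ u₁ u}) q =
      min (Set.ncard {u₂ : G₂.V | bisim d c L G₂ G₂ u₂ u}) q)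
lemma bisim_feat {d c L : ℕ} {G₁ G₂ : FGraph d} {a : G₁.V} {b : G₂.V}
    (h : bisim d c L G₁ G₂ a b) : G₁.f a = G₂.f b := by
  cases L with
  | zero => exact h
  | succ L => exact h.1

lemma bisim_refl (d c L : ℕ) (G : FGraph d) (u : G.V) : bisim d c L G G u u := by
  induction L generalizing u with
  | zero => rfl
  | succ L ih =>
    refine ⟨rfl, ?_, ?_⟩ <;>
    · intro k hk u₁ hinj hE
      exact ⟨u₁, hinj, hE, fun i => ih _⟩

lemma bisim_symm {d c L : ℕ} {G₁ G₂ : FGraph d} {a : G₁.V} {b : G₂.V} :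
    bisim d c L G₁ G₂ a b → bisim d c L G₂ G₁ b a := by
  induction L generalizing a b with
  | zero => exact fun h => h.symm
  | succ L ih =>
    rintro ⟨hf, hforth, hback⟩
    refine ⟨hf.symm, ?_, ?_⟩
    · intro k hk u₂ hinj hE
      obtain ⟨u₁, h1, h2, h3⟩ := hback k hk u₂ hinj hE
      exact ⟨u₁, h1, h2, fun i => ih (h3 i)⟩
    · intro k hk u₁ hinj hE
      obtain ⟨u₂, h1, h2, h3⟩ := hforth k hk u₁ hinj hE
      exact ⟨u₂, h1, h2, fun i => ih (h3 i)⟩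

lemma bisim_trans {d c L : ℕ} {G₁ G₂ G₃ : FGraph d} {a : G₁.V} {b : G₂.V} {e : G₃.V} :
    bisim d c L G₁ G₂ a b → bisim d c L G₂ G₃ b e → bisim d c L G₁ G₃ a e := by
  induction L generalizing a b e with
  | zero => exact fun h1 h2 => h1.trans h2
  | succ L ih =>
    rintro ⟨hf, hforth, hback⟩ ⟨hf', hforth', hback'⟩
    refine ⟨hf.trans hf', ?_, ?_⟩
    · intro k hk u₁ hinj hE
      obtain ⟨u₂, h1, h2, h3⟩ := hforth k hk u₁ hinj hE
      obtain ⟨u₃, g1, g2, g3⟩ := hforth' k hk u₂ h1 h2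
      exact ⟨u₃, g1, g2, fun i => ih (h3 i) (g3 i)⟩
    · intro k hk u₃ hinj hE
      obtain ⟨u₂, h1, h2, h3⟩ := hback' k hk u₃ hinj hE
      obtain ⟨u₁, g1, g2, g3⟩ := hback k hk u₂ h1 h2
      exact ⟨u₁, g1, g2, fun i => ih (g3 i) (h3 i)⟩

lemma bisim_mono {d c M L : ℕ} {G₁ G₂ : FGraph d} {a : G₁.V} {b : G₂.V}
    (hML : M ≤ L) (h : bisim d c L G₁ G₂ a b) : bisim d c M G₁ G₂ a b := by
  induction M generalizing L a b with
  | zero => exact bisim_feat h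
  | succ M ih =>
    obtain ⟨L', rfl⟩ : ∃ L', L = L' + 1 := ⟨L - 1, by omega⟩
    obtain ⟨hf, hforth, hback⟩ := h
    refine ⟨hf, ?_, ?_⟩
    · intro k hk u₁ hinj hE
      obtain ⟨u₂, h1, h2, h3⟩ := hforth k hk u₁ hinj hE
      exact ⟨u₂, h1, h2, fun i => ih (by omega) (h3 i)⟩
    · intro k hk u₂ hinj hE
      obtain ⟨u₁, h1, h2, h3⟩ := hback k hk u₂ hinj hE
      exact ⟨u₁, h1, h2, fun i => ih (by omega) (h3 i)⟩

lemma stmt8_key (d c L : ℕ) (G : FGraph d) (v w w' : G.V)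
    (hvw : G.E v w) (hvw' : ¬ G.E v w')
    (hbis : ∀ M, M + 1 ≤ L → bisim d c M G G w w') :
    ∀ M, M ≤ L → ∀ u : G.V,
      bisim d c M G
        { G with E := fun x y => (G.E x y ∧ ¬(x = v ∧ y = w)) ∨ (x = v ∧ y = w') } u u := by
  classical
  set G' : FGraph d :=
    { G with E := fun x y => (G.E x y ∧ ¬(x = v ∧ y = w)) ∨ (x = v ∧ y = w') } with hG'
  have hwne : w ≠ w' := fun h => hvw' (h ▸ hvw)
  intro M
  induction M with
  | zero => intro _ u; rfl
  | succ M ih =>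
    intro hML u
    have ihu : ∀ x : G.V, bisim d c M G G' x x := ih (by omega)
    have hww' : bisim d c M G G' w w' := bisim_trans (hbis M hML) (ihu w')
    refine ⟨rfl, ?_, ?_⟩
    · -- forth
      intro k hk u₁ hinj hE
      by_cases hu : u = v
      · subst hu
        have hne : ∀ i, u₁ i ≠ w' := fun i h => hvw' (h ▸ hE i)
        refine ⟨fun i => if u₁ i = w then w' else u₁ i, ?_, ?_, ?_⟩
        · intro i j hij
          by_cases hi : u₁ i = w <;> by_cases hj : u₁ j = w
          · exact hinj (hi.trans hj.symm)
          · simp only [if_pos hi, if_neg hj] at hij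
            exact absurd hij.symm (hne j)
          · simp only [if_neg hi, if_pos hj] at hij
            exact absurd hij (hne i)
          · simp only [if_neg hi, if_neg hj] at hij
            exact hinj hij
        · intro i
          by_cases hi : u₁ i = w
          · simp only [if_pos hi]
            exact Or.inr ⟨by trivial, by trivial⟩
          · simp only [if_neg hi]
            exact Or.inl ⟨hE i, fun h => hi h.2⟩
        · intro i
          by_cases hi : u₁ i = w
          · simp only [if_pos hi, hi]
            exact hww'
          · simp only [if_neg hi]
            exact ihu (u₁ i)
      · refine ⟨u₁, hinj, ?_, fun i => ihu (u₁ i)⟩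
        intro i
        exact Or.inl ⟨hE i, fun h => hu h.1⟩
    · -- back
      intro k hk u₂ hinj hE
      by_cases hu : u = v
      · subst hu
        have hne : ∀ i, u₂ i ≠ w' → u₂ i ≠ w := by
          intro i hi' hi
          rcases hE i with ⟨_, h2⟩ | ⟨_, h2⟩
          · exact h2 ⟨rfl, hi⟩
          · exact hi' h2
        refine ⟨fun i => if u₂ i = w' then w else u₂ i, ?_, ?_, ?_⟩
        · intro i j hij
          by_cases hi : u₂ i = w' <;> by_cases hj : u₂ j = w'
          · exact hinj (hi.trans hj.symm)
          · simp only [if_pos hi, if_neg hj] at hij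
            exact absurd hij.symm (hne j hj)
          · simp only [if_neg hi, if_pos hj] at hij
            exact absurd hij (hne i hi)
          · simp only [if_neg hi, if_neg hj] at hij
            exact hinj hij
        · intro i
          by_cases hi : u₂ i = w'
          · simp only [if_pos hi]
            exact hvw
          · simp only [if_neg hi]
            rcases hE i with ⟨h1, _⟩ | ⟨_, h2⟩
            · exact h1
            · exact absurd h2 hi
        · intro i
          by_cases hi : u₂ i = w'
          · simp only [if_pos hi, hi]
            exact hww'
          · simp only [if_neg hi]
            exact ihu (u₂ i)
      · refine ⟨u₂, hinj, ?_, fun i => ihu (u₂ i)⟩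
        intro i
        rcases hE i with ⟨h1, _⟩ | ⟨h1, _⟩
        · exact h1
        · exact absurd h1 hu

/-- Transferring an edge `(v, w)` to `(v, w′)`, where `w` and `w′`
are `∼^{L−1,c}`-bisimilar, preserves `∼^{L,c,*}_∃` at every vertex. -/
theorem stmt8 (d c L : ℕ) (hc : 1 ≤ c) (hL : 1 ≤ L)
    (G : FGraph d) (v w w' : G.V)
    (hvw : G.E v w) (hvw' : ¬ G.E v w')
    (hbis : bisim d c (L - 1) G G w w') :
    ∀ u : G.V,
      bisimStar d c L G
        { G with E := fun x y => (G.E x y ∧ ¬(x = v ∧ y = w)) ∨ (x = v ∧ y = w') } u u := by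
  intro u
  set G' : FGraph d :=
    { G with E := fun x y => (G.E x y ∧ ¬(x = v ∧ y = w)) ∨ (x = v ∧ y = w') } with hG'
  have hmono : ∀ M, M + 1 ≤ L → bisim d c M G G w w' := fun M hM =>
    bisim_mono (show M ≤ L - 1 by omega) hbis
  have hmain : ∀ x : G.V, bisim d c L G G' x x :=
    stmt8_key d c L G v w w' hvw hvw' hmono L le_rfl
  refine ⟨hmain u, ?_, ?_⟩
  · intro x
    congr 1
    ext y
    simp only [Set.mem_setOf_eq]
    constructor
    · intro h
      exact bisim_trans (bisim_symm (hmain y)) h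
    · intro h
      exact bisim_trans (hmain y) h
  · intro x
    congr 1
    ext y
    simp only [Set.mem_setOf_eq]
    constructor
    · intro h
      exact bisim_trans (bisim_symm (hmain y)) h
    · intro h
      exact bisim_trans (hmain y) h
end

section
/- For every d-dimensional GML^∃ formula φ there exist c ∈ ℕ and an ACR-GNN N with input dimension d and c-bounded aggregation functions such that for every pointed d-featured graph (G, v): N(G, v) = 1 if and only if G, v ⊨ φ. -/
/-- The `c`-restriction of a multiset: every multiplicity is capped at `c`. -/
noncomputable def mcap {α : Type*} (c : ℕ) (M : Multiset α) : Multiset α :=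
  letI := Classical.decEq α
  M.toFinset.val.bind fun x => Multiset.replicate (min (M.count x) c) x

/-- A function on finite multisets is `c`-bounded if it only depends on the
`c`-restriction of its argument. -/
def CBounded {α β : Type*} (c : ℕ) (F : Multiset α → β) : Prop :=
  ∀ M : Multiset α, F M = F (mcap c M)

/-- An `L`-layer aggregate-combine-readout GNN with input dimension `d`. -/
structure ACRGNN (d L : ℕ) where
  dims : ℕ → ℕ
  dims_zero : dims 0 = d
  agg : (i : ℕ) → Multiset (Fin (dims i) → ℝ) → (Fin (dims i) → ℝ)
  read : (i : ℕ) → Multiset (Fin (dims i) → ℝ) → (Fin (dims i) → ℝ)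
  comb : (i : ℕ) → (Fin (dims i) → ℝ) → (Fin (dims i) → ℝ) → (Fin (dims i) → ℝ) →
    (Fin (dims (i + 1)) → ℝ)
  cls : (Fin (dims L) → ℝ) → Bool

open Classical in
/-- The feature embeddings computed layer by layer by an ACR-GNN on a `d`-featured graph. -/
noncomputable def ACRGNN.emb {d L : ℕ} (N : ACRGNN d L) (G : FGraph d) :
    (i : ℕ) → G.V → (Fin (N.dims i) → ℝ)
  | 0 => fun v j => if G.f v (Fin.cast N.dims_zero j) then 1 else 0
  | i + 1 => fun v =>
      N.comb i (N.emb G i v)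
        (N.agg i ((Finset.univ.filter (fun u => G.E v u)).val.map (N.emb G i)))
        (N.read i (Finset.univ.val.map (N.emb G i)))

/-- Acceptance of a pointed featured graph by an ACR-GNN. -/
noncomputable def ACRGNN.accepts {d L : ℕ} (N : ACRGNN d L) (G : FGraph d) (v : G.V) : Bool :=
  N.cls (N.emb G L v)

/-- Dimension-wise multiset sum. -/
def sumAgg (n : ℕ) : Multiset (Fin n → ℝ) → (Fin n → ℝ) :=
  fun M j => (M.map fun x => x j).sum

/-- A simple ACR-GNN: sum aggregation and readout, combination functions of the form
`ReLU(x₁A + x₂C + x₃R + b)`, and a linear threshold classifier on `ℝ`. -/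
def ACRGNN.IsSimple {d L : ℕ} (N : ACRGNN d L) : Prop :=
  (∀ i, N.agg i = sumAgg (N.dims i)) ∧
  (∀ i, N.read i = sumAgg (N.dims i)) ∧
  (∀ i, ∃ (A C R : Matrix (Fin (N.dims i)) (Fin (N.dims (i + 1))) ℝ)
      (b : Fin (N.dims (i + 1)) → ℝ),
      ∀ x₁ x₂ x₃ j, N.comb i x₁ x₂ x₃ j =
        max 0 (Matrix.vecMul x₁ A j + Matrix.vecMul x₂ C j + Matrix.vecMul x₃ R j + b j)) ∧
  N.dims L = 1 ∧
  ∃ (a : Fin (N.dims L) → ℝ) (t : ℝ), ∀ x, N.cls x = decide (0 ≤ ∑ j, a j * x j + t)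
/-- Formulas of `d`-dimensional graded modal logic with graded global
(counting) modalities, `GML^∃`. -/
inductive GML (d : ℕ) : Type
  | top : GML d
  | prop : Fin d → GML d
  | not : GML d → GML d
  | and : GML d → GML d → GML d
  | dia : ℕ → GML d → GML d
  | ex : ℕ → GML d → GML d

/-- Satisfaction of a `GML^∃` formula at a vertex of a `d`-featured graph. -/
def GMLSat {d : ℕ} (G : FGraph d) : GML d → G.V → Prop
  | .top, _ => True
  | .prop i, v => G.f v i = true
  | .not φ, v => ¬ GMLSat G φ v
  | .and φ ψ, v => GMLSat G φ v ∧ GMLSat G ψ v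
  | .dia k φ, v => k ≤ Set.ncard {u : G.V | G.E v u ∧ GMLSat G φ u}
  | .ex k φ, _ => k ≤ Set.ncard {u : G.V | GMLSat G φ u}

/-!
The network gives every vertex one coordinate per subformula `ψ` of `φ`, holding `1` or `0`;
after layer `i + 1` the coordinate of `ψ` is the truth value of `ψ` whenever the modal depth of
`ψ` is at most `i`. Since combination functions are arbitrary, a layer can recompute every
subformula from its Boolean structure, given the own vector for the atoms, for each coordinate the
number of out-neighbours holding `1` (aggregation) and the number of all vertices holding `1`
(readout). The neighbour count is capped at the largest grade `c` of a `◇` in `φ`: this does not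
affect `◇_{≥k}` for `k ≤ c`, and a capped count of a multiset does not change when its
multiplicities are capped at `c`, which makes aggregation `c`-bounded.
-/

section Mcap

variable {α : Type*} (c : ℕ) (M : Multiset α)

theorem count_mcap [DecidableEq α] (x : α) : (mcap c M).count x = min (M.count x) c := by
  -- `mcap` counts with `Classical.decEq`
  obtain rfl : ‹DecidableEq α› = Classical.decEq α := Subsingleton.elim _ _
  let _ := Classical.decEq α
  rw [mcap, Multiset.count_bind]
  simp only [Multiset.count_replicate]
  exact (Finset.sum_ite_eq' M.toFinset x _).trans (by split_ifs with h <;> simp_all)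

theorem mcap_le : mcap c M ≤ M := by
  classical
  exact Multiset.le_iff_count.2 fun x => (count_mcap c M x).trans_le (min_le_left _ _)

theorem filter_mcap (p : α → Prop) [DecidablePred p] :
    (mcap c M).filter p = mcap c (M.filter p) := by
  classical
  ext x
  by_cases hp : p x <;> simp [count_mcap, hp]

theorem min_card_mcap : min (Multiset.card (mcap c M)) c = min (Multiset.card M) c := by
  classical
  by_cases h : ∃ x, c ≤ M.count x
  · obtain ⟨x, hx⟩ := h
    have hc : c ≤ Multiset.card (mcap c M) := by
      simpa [count_mcap, hx] using Multiset.count_le_card x (mcap c M)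
    have := Multiset.card_le_card (mcap_le c M)
    omega
  · push Not at h
    congr 2
    ext x
    simpa [count_mcap] using (h x).le

theorem min_countP_mcap (p : α → Prop) [DecidablePred p] :
    min ((mcap c M).countP p) c = min (M.countP p) c := by
  rw [Multiset.countP_eq_card_filter, Multiset.countP_eq_card_filter, filter_mcap, min_card_mcap]

end Mcap

theorem countP_map_filter_univ_eq_ncard {V β : Type*} [Fintype V] (P : V → Prop) [DecidablePred P]
    (g : V → β) (q : β → Prop) [DecidablePred q] :
    ((Finset.univ.filter P).val.map g).countP q = {u | P u ∧ q (g u)}.ncard := by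
  rw [Multiset.countP_map, ← Finset.filter_val, Finset.filter_filter, Set.ncard_eq_toFinset_card',
    Set.toFinset_ofPred]
  rfl

theorem countP_map_univ_eq_ncard {V β : Type*} [Fintype V] (g : V → β) (q : β → Prop)
    [DecidablePred q] : ((Finset.univ : Finset V).val.map g).countP q = {u | q (g u)}.ncard := by
  rw [Multiset.countP_map, ← Finset.filter_val, Set.ncard_eq_toFinset_card', Set.toFinset_ofPred]
  rfl

section Slots

variable {α : Type*}

open Classical in
noncomputable def entryOf (s : List α) (x : Fin s.length → ℝ) (a : α) : ℝ :=
  if h : ∃ j, s.get j = a then x h.choose else 0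

theorem exists_index_entryOf_eq {s : List α} {a : α} (h : a ∈ s) :
    ∃ j, s.get j = a ∧ ∀ x, entryOf s x a = x j :=
  have h' := List.mem_iff_get.1 h
  ⟨h'.choose, h'.choose_spec, fun _ => dif_pos h'⟩

open Classical in
noncomputable def indicatorVec (s : List α) (P : α → Prop) : Fin s.length → ℝ :=
  fun j => if P (s.get j) then 1 else 0

theorem entryOf_indicatorVec_eq_one_iff {s : List α} {a : α} (h : a ∈ s) (P : α → Prop) :
    entryOf s (indicatorVec s P) a = 1 ↔ P a := by
  obtain ⟨j, rfl, hj⟩ := exists_index_entryOf_eq h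
  rw [hj, indicatorVec]
  simp

end Slots

namespace GML

variable {d : ℕ}

def subformulas : GML d → List (GML d)
  | .top => [.top]
  | .prop p => [.prop p]
  | .not ψ => .not ψ :: ψ.subformulas
  | .and ψ χ => .and ψ χ :: (ψ.subformulas ++ χ.subformulas)
  | .dia k ψ => .dia k ψ :: ψ.subformulas
  | .ex k ψ => .ex k ψ :: ψ.subformulas

def depth : GML d → ℕ
  | .top | .prop _ => 0
  | .not ψ => ψ.depth
  | .and ψ χ => max ψ.depth χ.depth
  | .dia _ ψ | .ex _ ψ => ψ.depth + 1

def maxGrade : GML d → ℕ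
  | .top | .prop _ => 0
  | .not ψ | .ex _ ψ => ψ.maxGrade
  | .and ψ χ => max ψ.maxGrade χ.maxGrade
  | .dia k ψ => max k ψ.maxGrade

theorem mem_subformulas_self (φ : GML d) : φ ∈ φ.subformulas := by
  cases φ <;> simp [subformulas]

theorem mem_subformulas_trans {φ ψ χ : GML d} (hχ : χ ∈ ψ.subformulas)
    (hψ : ψ ∈ φ.subformulas) : χ ∈ φ.subformulas := by
  induction φ with
  | top | prop => simp_all [subformulas]
  | not _ ih | dia _ _ ih | ex _ _ ih =>
    rcases List.mem_cons.1 hψ with rfl | hψ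
    · exact hχ
    · exact List.mem_cons_of_mem _ (ih hψ)
  | and _ _ ih₁ ih₂ =>
    rcases List.mem_cons.1 hψ with rfl | hψ
    · exact hχ
    · simp only [subformulas, List.mem_cons, List.mem_append] at hψ ⊢
      exact Or.inr (hψ.imp ih₁ ih₂)

theorem mem_subformulas_of_dia_mem {φ ψ : GML d} {k : ℕ} (h : .dia k ψ ∈ φ.subformulas) :
    ψ ∈ φ.subformulas :=
  mem_subformulas_trans (ψ := .dia k ψ) (List.mem_cons_of_mem _ ψ.mem_subformulas_self) h

theorem mem_subformulas_of_ex_mem {φ ψ : GML d} {k : ℕ} (h : .ex k ψ ∈ φ.subformulas) :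
    ψ ∈ φ.subformulas :=
  mem_subformulas_trans (ψ := .ex k ψ) (List.mem_cons_of_mem _ ψ.mem_subformulas_self) h

theorem depth_le_of_mem_subformulas {φ ψ : GML d} (h : ψ ∈ φ.subformulas) :
    ψ.depth ≤ φ.depth := by
  induction φ with
  | top | prop => simp_all [subformulas]
  | not _ ih | dia _ _ ih | ex _ _ ih =>
    rcases List.mem_cons.1 h with rfl | h
    · exact le_rfl
    · exact (ih h).trans (by simp [depth])
  | and _ _ ih₁ ih₂ =>
    rcases List.mem_cons.1 h with rfl | h
    · exact le_rfl
    · rcases List.mem_append.1 h with h | h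
      · exact (ih₁ h).trans (le_max_left _ _)
      · exact (ih₂ h).trans (le_max_right _ _)

theorem le_maxGrade_of_dia_mem {φ ψ : GML d} {k : ℕ} (h : .dia k ψ ∈ φ.subformulas) :
    k ≤ φ.maxGrade := by
  induction φ with
  | top | prop => simp_all [subformulas]
  | not _ ih | ex _ _ ih => exact ih (by simpa [subformulas] using h)
  | dia _ _ ih =>
    rcases List.mem_cons.1 h with h | h
    · cases h; exact le_max_left _ _
    · exact (ih h).trans (le_max_right _ _)
  | and _ _ ih₁ ih₂ =>
    simp only [subformulas, List.mem_cons, reduceCtorEq, List.mem_append, false_or] at h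
    rcases h with h | h
    · exact (ih₁ h).trans (le_max_left _ _)
    · exact (ih₂ h).trans (le_max_right _ _)

def HoldsGiven (val : Fin d → Prop) (nbr glob : GML d → ℝ) : GML d → Prop
  | .top => True
  | .prop p => val p
  | .not ψ => ¬ ψ.HoldsGiven val nbr glob
  | .and ψ χ => ψ.HoldsGiven val nbr glob ∧ χ.HoldsGiven val nbr glob
  | .dia k ψ => k ≤ nbr ψ
  | .ex k ψ => k ≤ glob ψ

theorem holdsGiven_iff_gmlSat {G : FGraph d} {v : G.V} {val : Fin d → Prop}
    {nbr glob : GML d → ℝ} (ψ : GML d)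
    (hval : ∀ p, .prop p ∈ ψ.subformulas → (val p ↔ G.f v p = true))
    (hnbr : ∀ (k : ℕ) χ, .dia k χ ∈ ψ.subformulas →
      ((k : ℝ) ≤ nbr χ ↔ k ≤ {u | G.E v u ∧ GMLSat G χ u}.ncard))
    (hglob : ∀ (k : ℕ) χ, .ex k χ ∈ ψ.subformulas →
      ((k : ℝ) ≤ glob χ ↔ k ≤ {u | GMLSat G χ u}.ncard)) :
    ψ.HoldsGiven val nbr glob ↔ GMLSat G ψ v := by
  induction ψ <;> simp_all [HoldsGiven, GMLSat, subformulas]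

-- Reducible, so that `φ.gnn.dims (i + 1)` unfolds to `φ.subformulas.length` when rewriting.
noncomputable abbrev gnn (φ : GML d) : ACRGNN d (φ.depth + 1) where
  dims i := match i with
    | 0 => d
    | _ + 1 => φ.subformulas.length
  dims_zero := rfl
  agg i := match i with
    | 0 => fun _ => 0
    | _ + 1 => fun M j => (min (M.countP (· j = 1)) φ.maxGrade : ℕ)
  read i := match i with
    | 0 => fun _ => 0
    | _ + 1 => fun M j => (M.countP (· j = 1) : ℕ)
  comb i := match i with
    | 0 => fun x _ _ => indicatorVec φ.subformulas (HoldsGiven (x · = 1) 0 0)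
    | _ + 1 => fun x a r => indicatorVec φ.subformulas
        (HoldsGiven (fun p => entryOf _ x (.prop p) = 1) (entryOf _ a) (entryOf _ r))
  cls x := decide (entryOf φ.subformulas x φ = 1)

theorem entryOf_gnn_emb_eq_one_iff (φ : GML d) (G : FGraph d) (i : ℕ) (v : G.V) {χ : GML d}
    (hχ : χ ∈ φ.subformulas) (hdepth : χ.depth ≤ i) :
    entryOf φ.subformulas (φ.gnn.emb G (i + 1) v) χ = 1 ↔ GMLSat G χ v := by
  induction i generalizing v χ with
  | zero =>
    rw [ACRGNN.emb]
    refine (entryOf_indicatorVec_eq_one_iff hχ _).trans (holdsGiven_iff_gmlSat χ ?_ ?_ ?_)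
    · intro p _
      simp [gnn, ACRGNN.emb]
    all_goals
      intro k ψ h
      have := depth_le_of_mem_subformulas h
      simp only [depth] at this
      omega
  | succ i ih =>
    have hslot : ∀ ψ ∈ φ.subformulas, ψ.depth ≤ i → ∃ j : Fin φ.subformulas.length,
        (∀ x, entryOf φ.subformulas x ψ = x j) ∧
          ∀ u, φ.gnn.emb G (i + 1) u j = 1 ↔ GMLSat G ψ u := fun ψ hψ hψi => by
      obtain ⟨j, -, hj⟩ := exists_index_entryOf_eq hψ
      exact ⟨j, hj, fun u => by rw [← ih u hψ hψi, hj]⟩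
    rw [ACRGNN.emb]
    refine (entryOf_indicatorVec_eq_one_iff hχ _).trans (holdsGiven_iff_gmlSat χ ?_ ?_ ?_)
    · intro p hp
      exact ih v (mem_subformulas_trans hp hχ) (Nat.zero_le _)
    · intro k ψ h
      have hψi : ψ.depth + 1 ≤ i + 1 := (depth_le_of_mem_subformulas h).trans hdepth
      obtain ⟨j, hj, hsat⟩ :=
        hslot ψ (mem_subformulas_of_dia_mem (mem_subformulas_trans h hχ)) (by omega)
      have hk := le_maxGrade_of_dia_mem (mem_subformulas_trans h hχ)
      rw [hj]
      dsimp only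
      rw [countP_map_filter_univ_eq_ncard]
      simp only [hsat, Nat.cast_le, le_min_iff, hk, and_true]
    · intro k ψ h
      have hψi : ψ.depth + 1 ≤ i + 1 := (depth_le_of_mem_subformulas h).trans hdepth
      obtain ⟨j, hj, hsat⟩ :=
        hslot ψ (mem_subformulas_of_ex_mem (mem_subformulas_trans h hχ)) (by omega)
      rw [hj]
      dsimp only
      rw [countP_map_univ_eq_ncard]
      simp only [hsat, Nat.cast_le]

theorem cBounded_gnn_agg (φ : GML d) (i : ℕ) : CBounded φ.maxGrade (φ.gnn.agg i) := by
  intro M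
  cases i with
  | zero => rfl
  | succ i =>
    funext j
    dsimp only
    rw [min_countP_mcap]

end GML

/-- Every `d`-dimensional `GML^∃` formula is captured by some
ACR-GNN with input dimension `d` and `c`-bounded aggregation functions. -/
theorem stmt16 (d : ℕ) (φ : GML d) :
    ∃ (c L : ℕ) (N : ACRGNN d L), (∀ i, CBounded c (N.agg i)) ∧
      ∀ (G : FGraph d) (v : G.V), N.accepts G v = true ↔ GMLSat G φ v :=
  ⟨φ.maxGrade, φ.depth + 1, φ.gnn, φ.cBounded_gnn_agg, fun G v =>
    decide_eq_true_iff.trans <|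
      φ.entryOf_gnn_emb_eq_one_iff G φ.depth v φ.mem_subformulas_self le_rfl⟩
end
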